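/- arXiv:0911.2099 — 10 statements merged into one kernel-verified Lean document; each statement's English description precedes it below -/
import Mathlib

section
/- Let A = (a_{i,j}) be an n×n real matrix. Then the permanent of A equals (-1)^n · ∑_{S ⊆ {1,...,n}} (-1)^{|S|} ∏_{i=1}^n (∑_{j∈S} a_{i,j}). -/
/-!
Expanding `∏ᵢ ∑_{j ∈ S} aᵢⱼ` as a sum over maps `f` with range in `S` and exchanging the sums,
the coefficient of `∏ᵢ a_{i, f i}` becomes `∑_{S ⊇ range f} (-1)^|S|`. This alternating sum is the
expansion of `∏ⱼ (-1 + [j ∉ range f])`, so it vanishes unless `f` is surjective, i.e. a permutation,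
in which case it is `(-1)^n`.
-/

open Finset

def permanent {n : ℕ} (A : Matrix (Fin n) (Fin n) ℝ) : ℝ :=
  ∑ σ : Equiv.Perm (Fin n), ∏ i, A i (σ i)

section

variable {R α ι : Type*} [CommRing R] [Fintype α] [Fintype ι] [DecidableEq ι]

theorem sum_neg_one_pow_card_supersets_range (f : α → ι) :
    ∑ S : Finset ι, (if ∀ a, f a ∈ S then (-1 : R) ^ #S else 0) =
      if Function.Surjective f then (-1) ^ Fintype.card ι else 0 := by
  calc ∑ S : Finset ι, (if ∀ a, f a ∈ S then (-1 : R) ^ #S else 0)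
      = ∑ S : Finset ι,
          (∏ _j ∈ S, (-1 : R)) * ∏ j ∈ univ \ S, if ¬∃ a, f a = j then 1 else 0 := by
        refine sum_congr rfl fun S _ => ?_
        have range_subset_iff : (∀ a, f a ∈ S) ↔ ∀ j ∈ univ \ S, ¬∃ a, f a = j := by
          simp only [mem_sdiff, mem_univ, true_and, not_exists]
          exact ⟨fun h j hj a ha => hj (ha ▸ h a), fun h a => by_contra fun ha => h _ ha a rfl⟩
        simp only [prod_const, prod_boole, mul_ite, mul_one, mul_zero, range_subset_iff]
    _ = ∏ j, (-1 + if ¬∃ a, f a = j then 1 else 0) := by rw [prod_add, powerset_univ]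
    _ = ∏ j, if ∃ a, f a = j then -1 else 0 := by
        refine prod_congr rfl fun j _ => ?_
        split_ifs <;> simp_all
    _ = if Function.Surjective f then (-1) ^ Fintype.card ι else 0 := by
        rw [Fintype.prod_ite_zero, prod_const, card_univ]
        rfl

theorem prod_sum_eq_sum_ite_forall_mem {κ : Type*} [Fintype κ] [DecidableEq κ]
    (g : ι → κ → R) (S : Finset κ) :
    ∏ i, ∑ j ∈ S, g i j = ∑ f : ι → κ, if ∀ i, f i ∈ S then ∏ i, g i (f i) else 0 := by
  rw [prod_univ_sum, ← sum_filter]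
  congr 1
  ext f
  simp

theorem sum_ite_surjective_eq_sum_perm {M : Type*} [AddCommMonoid M] (g : (ι → ι) → M) :
    ∑ f : ι → ι, (if Function.Surjective f then g f else 0) = ∑ σ : Equiv.Perm ι, g σ := by
  rw [← sum_filter]
  refine (sum_bij (fun (σ : Equiv.Perm ι) _ => (σ : ι → ι)) (fun σ _ => by simpa using σ.surjective)
    (fun σ _ τ _ h => Equiv.coe_fn_injective h) (fun f hf => ?_) fun _ _ => rfl).symm
  have hf : f.Bijective := Finite.surjective_iff_bijective.mp (mem_filter.mp hf).2
  exact ⟨Equiv.ofBijective f hf, mem_univ _, rfl⟩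

theorem sum_neg_one_pow_card_mul_prod_sum (A : Matrix ι ι R) :
    ∑ S : Finset ι, (-1 : R) ^ #S * ∏ i, ∑ j ∈ S, A i j =
      (-1) ^ Fintype.card ι * ∑ σ : Equiv.Perm ι, ∏ i, A i (σ i) := by
  calc ∑ S : Finset ι, (-1 : R) ^ #S * ∏ i, ∑ j ∈ S, A i j
      = ∑ f : ι → ι,
          (∑ S : Finset ι, if ∀ i, f i ∈ S then (-1 : R) ^ #S else 0) * ∏ i, A i (f i) := by
        simp only [prod_sum_eq_sum_ite_forall_mem A, mul_sum, sum_mul]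
        rw [sum_comm]
        refine sum_congr rfl fun f _ => sum_congr rfl fun S _ => ?_
        split_ifs <;> simp
    _ = ∑ f : ι → ι,
          if Function.Surjective f then (-1) ^ Fintype.card ι * ∏ i, A i (f i) else 0 := by
        simp only [sum_neg_one_pow_card_supersets_range, ite_mul, zero_mul]
    _ = (-1) ^ Fintype.card ι * ∑ σ : Equiv.Perm ι, ∏ i, A i (σ i) := by
        rw [sum_ite_surjective_eq_sum_perm, mul_sum]

end

/-- **Ryser's formula.** `per(A) = (-1)^n ∑_{S ⊆ {1,…,n}} (-1)^{|S|} ∏ᵢ (∑_{j ∈ S} aᵢⱼ)`. -/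
theorem ryser_formula (n : ℕ) (A : Matrix (Fin n) (Fin n) ℝ) :
    permanent A =
      (-1 : ℝ) ^ n * ∑ S : Finset (Fin n), (-1 : ℝ) ^ S.card * ∏ i, ∑ j ∈ S, A i j := by
  rw [sum_neg_one_pow_card_mul_prod_sum, Fintype.card_fin, ← mul_assoc, ← mul_pow, neg_one_mul,
    neg_neg, one_pow, one_mul, permanent]
end

section
/- Let P ∈ ℝ[x_1,...,x_n] be a polynomial of total degree m, and let f : {1,...,n} → ℕ⁺ satisfy ∑_i f(i) = m + n. Let NZ(P) be the set of points (z_1,...,z_n) with integer coordinates 0 ≤ z_i ≤ f(i)−1 at which P is nonzero. If ∑_{(z_1,...,z_n) ∈ NZ(P)} (-1)^{z_1+⋯+z_n} ∏_{i=1}^n C(f(i)−1, z_i) · P(z_1,...,z_n) ≠ 0, then for all sets S_1,...,S_n ⊆ ℝ with |S_i| ≥ f(i), there exists (s_1,...,s_n) ∈ S_1 × ⋯ × S_n with P(s_1,...,s_n) ≠ 0. -/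
/-!
Weighting the values of `P` on the box `∏ {0, …, f i - 1}` by `(-1)^{z_i} C(f i - 1, z_i)` takes
an iterated forward difference of order `f i - 1` in each variable. This kills every monomial of
total degree at most `m` other than `∏ x_i^{f i - 1}`, so the signed sum is
`± ∏ (f i - 1)!` times the coefficient of that monomial. The coefficient is therefore nonzero,
and as the monomial has degree `m = deg P`, Alon's Combinatorial Nullstellensatz gives the point.
-/

open MvPolynomial Finset

section

variable {R : Type*} [CommRing R]

theorem sum_range_neg_one_pow_mul_choose_mul_eq_fwdDiff_iter (g : R → R) (k : ℕ) :
    ∑ z ∈ range (k + 1), (-1 : R) ^ z * k.choose z * g z = (-1) ^ k * (fwdDiff 1)^[k] g 0 := by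
  rw [fwdDiff_iter_eq_sum_shift, mul_sum]
  refine sum_congr rfl fun z hz => ?_
  have hzk : z ≤ k := Nat.lt_succ_iff.mp (mem_range.mp hz)
  rw [zsmul_eq_mul, zero_add, nsmul_one]
  push_cast
  rw [← mul_assoc, ← mul_assoc, ← pow_add, show k + (k - z) = z + 2 * (k - z) by omega,
    pow_add, pow_mul, neg_one_sq, one_pow, mul_one]

theorem sum_range_neg_one_pow_mul_choose_mul_pow_of_lt {j k : ℕ} (h : j < k) :
    ∑ z ∈ range (k + 1), (-1 : R) ^ z * k.choose z * (z : R) ^ j = 0 := by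
  rw [sum_range_neg_one_pow_mul_choose_mul_eq_fwdDiff_iter (· ^ j),
    fwdDiff_iter_pow_eq_zero_of_lt h, Pi.zero_apply, mul_zero]

theorem sum_range_neg_one_pow_mul_choose_mul_pow_self (k : ℕ) :
    ∑ z ∈ range (k + 1), (-1 : R) ^ z * k.choose z * (z : R) ^ k = (-1) ^ k * k.factorial := by
  rw [sum_range_neg_one_pow_mul_choose_mul_eq_fwdDiff_iter (· ^ k), fwdDiff_iter_eq_factorial]
  rfl

end

theorem exists_lt_of_ne_of_sum_le {σ : Type*} [Fintype σ] {d k : σ → ℕ} (hne : d ≠ k)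
    (hle : ∑ i, d i ≤ ∑ i, k i) : ∃ i, d i < k i := by
  by_contra! hge
  obtain ⟨i, hi⟩ := Function.ne_iff.mp hne
  exact (sum_lt_sum (fun i _ => hge i) ⟨i, mem_univ i, (hge i).lt_of_ne' hi⟩).not_ge hle

theorem MvPolynomial.sum_piFinset_neg_one_pow_mul_choose_mul_eval {σ R : Type*} [Fintype σ]
    [DecidableEq σ] [CommRing R] (P : MvPolynomial σ R) (k : σ → ℕ)
    (hP : P.totalDegree ≤ ∑ i, k i) :
    ∑ z ∈ Fintype.piFinset (fun i => range (k i + 1)),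
        (-1 : R) ^ (∑ i, z i) * (∏ i, ((k i).choose (z i) : R)) * eval (fun i => (z i : R)) P
      = (-1) ^ (∑ i, k i) * (∏ i, ((k i).factorial : R)) *
          coeff (Finsupp.equivFunOnFinite.symm k) P := by
  have hmonomial : ∀ d : σ →₀ ℕ,
      ∑ z ∈ Fintype.piFinset (fun i => range (k i + 1)),
        ∏ i, ((-1 : R) ^ z i * (k i).choose (z i) * (z i : R) ^ d i)
      = ∏ i, ∑ z ∈ range (k i + 1), (-1 : R) ^ z * (k i).choose z * (z : R) ^ d i :=
    fun d => by rw [prod_univ_sum]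
  calc _ = ∑ d ∈ P.support, coeff d P * ∏ i, ∑ z ∈ range (k i + 1),
          (-1 : R) ^ z * (k i).choose z * (z : R) ^ d i := by
        simp_rw [eval_eq', mul_sum, ← hmonomial, mul_sum]
        rw [sum_comm]
        refine sum_congr rfl fun d _ => sum_congr rfl fun z _ => ?_
        rw [← prod_pow_eq_pow_sum, prod_mul_distrib, prod_mul_distrib]
        ring
    _ = coeff (Finsupp.equivFunOnFinite.symm k) P * ∏ i, ∑ z ∈ range (k i + 1),
          (-1 : R) ^ z * (k i).choose z * (z : R) ^ k i := by
        refine sum_eq_single _ (fun d hd hne => ?_) fun hk => by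
          rw [notMem_support_iff.mp hk, zero_mul]
        have hdeg : ∑ i, d i ≤ ∑ i, k i :=
          (d.sum_fintype _ fun _ => rfl).symm.trans_le ((le_totalDegree hd).trans hP)
        obtain ⟨i, hi⟩ := exists_lt_of_ne_of_sum_le
          (fun h => hne ((Equiv.eq_symm_apply _).mpr h)) hdeg
        rw [prod_eq_zero (mem_univ i) (sum_range_neg_one_pow_mul_choose_mul_pow_of_lt hi), mul_zero]
    _ = _ := by
        simp_rw [sum_range_neg_one_pow_mul_choose_mul_pow_self, prod_mul_distrib,
          prod_pow_eq_pow_sum]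
        ring

/-- Theorem (general list version). Let `P ∈ ℝ[x₁,…,xₙ]` have total degree `m` and let
`f : {1,…,n} → ℕ⁺` satisfy `∑ f(i) = m + n`.  If the signed sum over the non-zeros of `P` in the
box `{0,…,f(1)-1} × ⋯ × {0,…,f(n)-1}` of `(-1)^{∑ zᵢ} ∏ C(f(i)-1, zᵢ) P(z)` is non-zero, then for
all `S₁,…,Sₙ ⊆ ℝ` with `|Sᵢ| ≥ f(i)` there is `(s₁,…,sₙ) ∈ S₁ × ⋯ × Sₙ` with `P(s) ≠ 0`. -/
theorem nonvanishing_of_signed_sum (n m : ℕ) (P : MvPolynomial (Fin n) ℝ)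
    (hm : P.totalDegree = m) (f : Fin n → ℕ) (hf : ∀ i, 1 ≤ f i)
    (hsum : ∑ i, f i = m + n)
    (hNZ : ∑ z ∈ (Fintype.piFinset fun i => Finset.range (f i)).filter
          (fun z => MvPolynomial.eval (fun i => (z i : ℝ)) P ≠ 0),
        (-1 : ℝ) ^ (∑ i, z i) * (∏ i, ((f i - 1).choose (z i) : ℝ)) *
          MvPolynomial.eval (fun i => (z i : ℝ)) P ≠ 0) :
    ∀ S : Fin n → Finset ℝ, (∀ i, f i ≤ (S i).card) →
      ∃ s : Fin n → ℝ, (∀ i, s i ∈ S i) ∧ MvPolynomial.eval s P ≠ 0 := by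
  intro S hcard
  obtain ⟨k, rfl⟩ : ∃ k : Fin n → ℕ, f = fun i => k i + 1 :=
    ⟨fun i => f i - 1, funext fun i => (Nat.sub_add_cancel (hf i)).symm⟩
  have hdeg : P.totalDegree = ∑ i, k i := by
    simp only [sum_add_distrib, sum_const, card_univ, Fintype.card_fin, smul_eq_mul,
      mul_one] at hsum
    omega
  simp only [Nat.add_sub_cancel] at hNZ
  rw [sum_filter_of_ne fun z _ h => right_ne_zero_of_mul h,
    sum_piFinset_neg_one_pow_mul_choose_mul_eval P k hdeg.le] at hNZ
  exact combinatorial_nullstellensatz_exists_eval_nonzero P _ (right_ne_zero_of_mul hNZ)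
    (by rw [Finsupp.degree_eq_sum]; exact hdeg) S fun i => hcard i
end

section
/- Let P ∈ ℝ[x_1,...,x_n] be a polynomial of total degree m, and let f : {1,...,n} → ℕ⁺ satisfy ∑_i f(i) = m + n. Then the coefficient of ∏_{i=1}^n x_i^{f(i)−1} in P, multiplied by ∏_{i=1}^n (f(i)−1)!, equals (-1)^m times the sum over all integer points (z_1,...,z_n) with 0 ≤ z_i ≤ f(i)−1 of (-1)^{z_1+⋯+z_n} ∏_{i=1}^n C(f(i)−1, z_i) · P(z_1,...,z_n). -/
open MvPolynomial Finset

private def Sd (d a : ℕ) : ℝ :=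
  ∑ z ∈ Finset.range (d + 1), (-1 : ℝ) ^ z * (d.choose z : ℝ) * (z : ℝ) ^ a

private lemma Sd_succ (d a : ℕ) :
    Sd (d + 1) a = - ∑ j ∈ Finset.range a, (a.choose j : ℝ) * Sd d j := by
  have h1 : Sd (d + 1) a
      = (∑ w ∈ Finset.range (d + 1),
          ((-1 : ℝ) ^ (w + 1) * (d.choose w : ℝ) * ((w : ℝ) + 1) ^ a
           + (-1 : ℝ) ^ (w + 1) * (d.choose (w + 1) : ℝ) * ((w : ℝ) + 1) ^ a))
        + (-1 : ℝ) ^ 0 * ((d + 1).choose 0 : ℝ) * ((0 : ℕ) : ℝ) ^ a := by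
    rw [Sd, Finset.sum_range_succ']
    congr 1
    apply Finset.sum_congr rfl
    intro w _
    rw [Nat.choose_succ_succ]
    push_cast
    ring
  have h2 : Sd d a
      = (∑ w ∈ Finset.range (d + 1),
          (-1 : ℝ) ^ (w + 1) * (d.choose (w + 1) : ℝ) * ((w : ℝ) + 1) ^ a)
        + (-1 : ℝ) ^ 0 * (d.choose 0 : ℝ) * ((0 : ℕ) : ℝ) ^ a := by
    have h : Sd d a = ∑ z ∈ Finset.range (d + 2), (-1 : ℝ) ^ z * (d.choose z : ℝ) * (z : ℝ) ^ a := by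
      rw [Sd]
      symm
      rw [Finset.sum_range_succ]
      simp [Nat.choose_succ_self]
    rw [h, Finset.sum_range_succ']
    congr 1
    apply Finset.sum_congr rfl
    intro w _
    push_cast
    ring
  have h3 : (∑ w ∈ Finset.range (d + 1),
      (-1 : ℝ) ^ (w + 1) * (d.choose w : ℝ) * ((w : ℝ) + 1) ^ a)
      = - ∑ j ∈ Finset.range (a + 1), (a.choose j : ℝ) * Sd d j := by
    simp_rw [Sd, Finset.mul_sum, ← Finset.sum_neg_distrib]
    rw [Finset.sum_comm]
    apply Finset.sum_congr rfl
    intro w _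
    have hb : ((w : ℝ) + 1) ^ a = ∑ j ∈ Finset.range (a + 1), (w : ℝ) ^ j * (a.choose j : ℝ) := by
      have := add_pow (w : ℝ) 1 a
      simp at this
      rw [this]
    rw [hb, Finset.mul_sum]
    apply Finset.sum_congr rfl
    intro j _
    ring
  rw [h1, Finset.sum_add_distrib, add_assoc, h3]
  have h4 : (∑ w ∈ Finset.range (d + 1),
      (-1 : ℝ) ^ (w + 1) * (d.choose (w + 1) : ℝ) * ((w : ℝ) + 1) ^ a)
      + (-1 : ℝ) ^ 0 * ((d + 1).choose 0 : ℝ) * ((0 : ℕ) : ℝ) ^ a = Sd d a := by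
    rw [h2]; simp
  rw [h4, Finset.sum_range_succ]
  simp

private lemma Sd_eq (d : ℕ) : ∀ a ≤ d,
    Sd d a = if a = d then (-1 : ℝ) ^ d * (d.factorial : ℝ) else 0 := by
  induction d with
  | zero =>
    intro a ha
    interval_cases a
    simp [Sd]
  | succ d ih =>
    intro a ha
    rw [Sd_succ]
    rcases eq_or_lt_of_le ha with h | h
    · subst h
      rw [Finset.sum_eq_single d]
      · rw [ih d le_rfl]
        simp only [if_pos rfl, if_pos rfl]
        rw [Nat.choose_succ_self_right]
        rw [Nat.factorial_succ]
        push_cast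
        ring
      · intro j hj hjd
        rw [ih j (by simp at hj; omega)]
        simp [hjd]
      · intro h
        exact absurd (Finset.self_mem_range_succ d) h
    · have : ∀ j ∈ Finset.range a, (a.choose j : ℝ) * Sd d j = 0 := by
        intro j hj
        simp only [Finset.mem_range] at hj
        rw [ih j (by omega)]
        have : j ≠ d := by omega
        simp [this]
      rw [Finset.sum_eq_zero this]
      have : a ≠ d + 1 := by omega
      simp [this]

private lemma Sd_def (d a : ℕ) :
    Sd d a = ∑ z ∈ Finset.range (d + 1), (-1 : ℝ) ^ z * (d.choose z : ℝ) * (z : ℝ) ^ a := rfl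

/-- The key identity: for `P ∈ ℝ[x₁,…,xₙ]` of total degree `m` and `f : {1,…,n} → ℕ⁺` with
`∑ f(i) = m + n`, the coefficient of `∏ xᵢ^{f(i)-1}` in `P`, multiplied by `∏ (f(i)-1)!`, equals
`(-1)^m ∑_{0 ≤ zᵢ ≤ f(i)-1} (-1)^{∑ zᵢ} ∏ C(f(i)-1, zᵢ) · P(z₁,…,zₙ)`. -/
theorem coeff_eq_signed_sum (n m : ℕ) (P : MvPolynomial (Fin n) ℝ)
    (hm : P.totalDegree = m) (f : Fin n → ℕ) (hf : ∀ i, 1 ≤ f i)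
    (hsum : ∑ i, f i = m + n) :
    P.coeff (Finsupp.equivFunOnFinite.symm fun i => f i - 1) * ∏ i, (Nat.factorial (f i - 1) : ℝ) =
      (-1 : ℝ) ^ m *
        ∑ z ∈ Fintype.piFinset fun i => Finset.range (f i),
          (-1 : ℝ) ^ (∑ i, z i) * (∏ i, ((f i - 1).choose (z i) : ℝ)) *
            MvPolynomial.eval (fun i => (z i : ℝ)) P := by
  have hfi : ∀ i, f i = (f i - 1) + 1 := fun i => (Nat.sub_add_cancel (hf i)).symm
  have hdsum : ∑ i, (f i - 1) = m := by
    have h : ∑ i, ((f i - 1) + 1) = ∑ i, f i := by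
      apply Finset.sum_congr rfl; intro i _; exact (hfi i).symm
    rw [Finset.sum_add_distrib, Finset.sum_const, smul_eq_mul, mul_one, Finset.card_univ,
      Fintype.card_fin, hsum] at h
    omega
  -- Step 1: rewrite the RHS sum
  have key : (∑ z ∈ Fintype.piFinset fun i => Finset.range (f i),
          (-1 : ℝ) ^ (∑ i, z i) * (∏ i, ((f i - 1).choose (z i) : ℝ)) *
            MvPolynomial.eval (fun i => (z i : ℝ)) P)
      = ∑ σ ∈ P.support, P.coeff σ * ∏ i, Sd (f i - 1) (σ i) := by
    have hpi : (Fintype.piFinset fun i => Finset.range (f i))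
        = Fintype.piFinset fun i => Finset.range ((f i - 1) + 1) := by
      congr 1; funext i; rw [← hfi]
    calc (∑ z ∈ Fintype.piFinset fun i => Finset.range (f i),
          (-1 : ℝ) ^ (∑ i, z i) * (∏ i, ((f i - 1).choose (z i) : ℝ)) *
            MvPolynomial.eval (fun i => (z i : ℝ)) P)
        = ∑ z ∈ Fintype.piFinset fun i => Finset.range ((f i - 1) + 1),
            ∑ σ ∈ P.support, P.coeff σ *
              ∏ i, ((-1 : ℝ) ^ (z i) * ((f i - 1).choose (z i) : ℝ) * ((z i : ℝ)) ^ (σ i)) := by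
          rw [hpi]
          apply Finset.sum_congr rfl
          intro z _
          rw [eval_eq', Finset.mul_sum]
          apply Finset.sum_congr rfl
          intro σ _
          rw [← Finset.prod_pow_eq_pow_sum, Finset.prod_mul_distrib, Finset.prod_mul_distrib]
          ring
      _ = ∑ σ ∈ P.support, ∑ z ∈ Fintype.piFinset fun i => Finset.range ((f i - 1) + 1),
            P.coeff σ *
              ∏ i, ((-1 : ℝ) ^ (z i) * ((f i - 1).choose (z i) : ℝ) * ((z i : ℝ)) ^ (σ i)) :=
          Finset.sum_comm
      _ = ∑ σ ∈ P.support, P.coeff σ * ∏ i, Sd (f i - 1) (σ i) := by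
          apply Finset.sum_congr rfl
          intro σ _
          rw [← Finset.mul_sum]
          congr 1
          symm
          calc ∏ i, Sd (f i - 1) (σ i)
              = ∏ i, ∑ x ∈ Finset.range ((f i - 1) + 1),
                  (-1 : ℝ) ^ x * ((f i - 1).choose x : ℝ) * (x : ℝ) ^ (σ i) := by
                apply Finset.prod_congr rfl; intro i _; rw [Sd_def]
            _ = _ := Finset.prod_univ_sum _ _
  rw [key]
  -- Step 2: only σ = target survives
  set D : (Fin n) →₀ ℕ := Finsupp.equivFunOnFinite.symm fun i => f i - 1 with hD
  have hDa : ∀ i, D i = f i - 1 := fun i => rfl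
  have main : ∑ σ ∈ P.support, P.coeff σ * ∏ i, Sd (f i - 1) (σ i)
      = P.coeff D * ∏ i, Sd (f i - 1) (f i - 1) := by
    have h0 : P.coeff D * ∏ i, Sd (f i - 1) (D i)
        = P.coeff D * ∏ i, Sd (f i - 1) (f i - 1) := by
      apply congrArg
      apply Finset.prod_congr rfl
      intro i _; rw [hDa]
    rw [← h0]
    apply Finset.sum_eq_single
    · intro σ hσ hne
      have hle : ∑ i, σ i ≤ m := by
        have h1 := MvPolynomial.le_totalDegree hσ
        rw [hm] at h1
        have h2 : (σ.sum fun _ e => e) = ∑ i, σ i := by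
          rw [Finsupp.sum]
          apply Finset.sum_subset (Finset.subset_univ _)
          intro i _ hi
          exact Finsupp.notMem_support_iff.mp hi
        omega
      have hex : ∃ j, σ j < f j - 1 := by
        by_contra hcon
        push_neg at hcon
        have hne2 : ∃ j, σ j ≠ f j - 1 := by
          by_contra hall
          push_neg at hall
          apply hne
          apply Finsupp.ext
          intro i
          rw [hall i, hDa]
        obtain ⟨j, hj⟩ := hne2
        have : ∑ i, (f i - 1) < ∑ i, σ i := by
          apply Finset.sum_lt_sum
          · intro i _; exact hcon i
          · exact ⟨j, Finset.mem_univ j, by have := hcon j; omega⟩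
        omega
      obtain ⟨j, hj⟩ := hex
      have hz : Sd (f j - 1) (σ j) = 0 := by
        rw [Sd_eq _ _ (le_of_lt hj)]
        simp [Nat.ne_of_lt hj]
      rw [Finset.prod_eq_zero (Finset.mem_univ j) hz, mul_zero]
    · intro hD'
      rw [MvPolynomial.notMem_support_iff.mp hD', zero_mul]
  rw [main]
  -- Step 3: compute the product
  have hprod : ∏ i, Sd (f i - 1) (f i - 1)
      = (-1 : ℝ) ^ m * ∏ i, (Nat.factorial (f i - 1) : ℝ) := by
    have : ∀ i : Fin n, Sd (f i - 1) (f i - 1)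
        = (-1 : ℝ) ^ (f i - 1) * (Nat.factorial (f i - 1) : ℝ) := by
      intro i
      rw [Sd_eq _ _ le_rfl]
      simp
    rw [Finset.prod_congr rfl (fun i _ => this i), Finset.prod_mul_distrib,
      Finset.prod_pow_eq_pow_sum, hdsum]
  rw [hprod]
  have hss : (-1 : ℝ) ^ m * (-1 : ℝ) ^ m = 1 := by
    rw [← pow_add]; exact Even.neg_one_pow ⟨m, by ring⟩
  linear_combination (-(P.coeff D * ∏ i, (Nat.factorial (f i - 1) : ℝ))) * hss
end

section
/- Let G be a simple graph on vertex set {1,...,n} with m edges and graph polynomial P_G(x_1,...,x_n) = ∏_{(i,j)∈E, i<j} (x_i − x_j). Let f : {1,...,n} → ℕ⁺ satisfy ∑_i f(i) = m + n, and let C_f be the set of proper colorings c : {1,...,n} → {0,1,...,max_i f(i) − 1} of G. Then the coefficient of ∏_{i=1}^n x_i^{f(i)−1} in P_G is nonzero if and only if ∑_{c ∈ C_f} (-1)^{c(1)+⋯+c(n)} ∏_{i=1}^n C(f(i)−1, c(i)) · P_G(c(1),...,c(n)) ≠ 0. -/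
/-!
Write `d i = f i - 1` and `P_G = ∑ₜ aₜ xᵗ`. The signed sum over the whole colour box factors
monomial by monomial as `∑ₜ aₜ ∏ᵢ ∑ₖ (-1)ᵏ C(dᵢ, k) kᵗⁱ`, and the inner sum is `(-1)^dᵢ` times the
`dᵢ`-th forward difference of `x ↦ x^tᵢ` at `0`: it vanishes for `tᵢ < dᵢ` and equals `(-1)^dᵢ dᵢ!`
for `tᵢ = dᵢ`. As `P_G` has degree `m = ∑ dᵢ`, every monomial other than `xᵈ` has some `tᵢ < dᵢ`,
so the sum is `a_d ∏ᵢ (-1)^dᵢ dᵢ!`. Improper colourings contribute nothing, as `P_G` vanishes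
there.
-/

open MvPolynomial Finset

/-- The graph polynomial `P_G = ∏_{(i,j) ∈ E, i < j} (xᵢ - xⱼ)`. -/
noncomputable def graphPoly {V : Type} [Fintype V] [LinearOrder V] (G : SimpleGraph V)
    [DecidableRel G.Adj] : MvPolynomial V ℝ :=
  ∏ p ∈ Finset.univ.filter (fun p : V × V => p.1 < p.2 ∧ G.Adj p.1 p.2), (X p.1 - X p.2)

/-- `G` is Alon–Tarsi `k`-choosable: `P_G` has a monomial with non-zero coefficient all of whose
exponents are at most `k - 1`. -/
def IsAT {V : Type} [Fintype V] [LinearOrder V] (G : SimpleGraph V) [DecidableRel G.Adj]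
    (k : ℕ) : Prop :=
  ∃ t : V →₀ ℕ, (graphPoly G).coeff t ≠ 0 ∧ ∀ i, t i + 1 ≤ k

/-- The Alon–Tarsi number of `G`: the least `k` such that `G` is Alon–Tarsi `k`-choosable. -/
noncomputable def ATnum {V : Type} [Fintype V] [LinearOrder V] (G : SimpleGraph V)
    [DecidableRel G.Adj] : ℕ :=
  sInf {k | IsAT G k}

open scoped fwdDiff Nat

lemma sum_range_alternating_choose_mul_pow {R : Type*} [CommRing R] {d N : ℕ} (hdN : d < N)
    (j : ℕ) :
    ∑ k ∈ range N, (-1 : R) ^ k * d.choose k * (k : R) ^ j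
      = (-1) ^ d * (Δ_[1])^[d] (fun r : R => r ^ j) 0 := by
  rw [fwdDiff_iter_eq_sum_shift, mul_sum]
  refine (sum_subset (range_subset_range.mpr hdN) fun k _ hk => ?_).symm.trans
    (sum_congr rfl fun k hk => ?_)
  · rw [Nat.choose_eq_zero_of_lt (by simpa using hk)]
    simp
  · have hsign : (-1 : R) ^ d * (-1) ^ (d - k) = (-1) ^ k := by
      rw [mem_range] at hk
      rw [← pow_add, show d + (d - k) = 2 * (d - k) + k by omega, pow_add, pow_mul]
      simp
    simp only [zsmul_eq_mul, Int.cast_mul, Int.cast_pow, Int.cast_neg, Int.cast_one,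
      Int.cast_natCast, nsmul_eq_mul, mul_one, zero_add]
    rw [← mul_assoc, ← mul_assoc, hsign]

lemma exists_lt_of_mem_support_of_totalDegree_le {σ R : Type*} [Fintype σ] [CommSemiring R]
    {P : MvPolynomial σ R} {d : σ → ℕ} (hP : P.totalDegree ≤ ∑ i, d i) {t : σ →₀ ℕ}
    (ht : t ∈ P.support) (htd : t ≠ Finsupp.equivFunOnFinite.symm d) : ∃ i, t i < d i := by
  by_contra! hdt
  have hsum : ∑ i, t i ≤ ∑ i, d i := by
    rw [← Finsupp.sum_fintype t (fun _ e => e) fun _ => rfl]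
    exact (le_totalDegree ht).trans hP
  refine htd (Finsupp.ext fun i => ?_)
  have heq : ∑ i, d i = ∑ i, t i := le_antisymm (sum_le_sum fun i _ => hdt i) hsum
  exact ((sum_eq_sum_iff_of_le fun i _ => hdt i).mp heq i (mem_univ i)).symm

section AlternatingBoxSum

variable {σ R : Type*} [Fintype σ] [DecidableEq σ] [CommRing R]

lemma sum_piFinset_alternating_choose_mul_eval (P : MvPolynomial σ R) (d : σ → ℕ) (N : ℕ) :
    ∑ c ∈ Fintype.piFinset (fun _ : σ => range N),
        (-1 : R) ^ (∑ i, c i) * (∏ i, ((d i).choose (c i) : R)) * eval (fun i => (c i : R)) P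
      = ∑ t ∈ P.support,
          P.coeff t * ∏ i, ∑ k ∈ range N, (-1 : R) ^ k * (d i).choose k * (k : R) ^ t i := by
  simp_rw [eval_eq', mul_sum]
  rw [sum_comm]
  refine sum_congr rfl fun t _ => ?_
  rw [prod_univ_sum, mul_sum]
  refine sum_congr rfl fun c _ => ?_
  rw [← prod_pow_eq_pow_sum, prod_mul_distrib, prod_mul_distrib]
  ring

theorem sum_piFinset_alternating_choose_mul_eval_of_totalDegree_le (P : MvPolynomial σ R)
    {d : σ → ℕ} {N : ℕ} (hdN : ∀ i, d i < N) (hP : P.totalDegree ≤ ∑ i, d i) :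
    ∑ c ∈ Fintype.piFinset (fun _ : σ => range N),
        (-1 : R) ^ (∑ i, c i) * (∏ i, ((d i).choose (c i) : R)) * eval (fun i => (c i : R)) P
      = P.coeff (Finsupp.equivFunOnFinite.symm d) * ∏ i, (-1 : R) ^ d i * (d i)! := by
  simp_rw [sum_piFinset_alternating_choose_mul_eval, sum_range_alternating_choose_mul_pow (hdN _)]
  rw [sum_eq_single (Finsupp.equivFunOnFinite.symm d)]
  · simp [fwdDiff_iter_eq_factorial]
  · intro t ht htd
    obtain ⟨i, hi⟩ := exists_lt_of_mem_support_of_totalDegree_le hP ht htd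
    rw [prod_eq_zero (mem_univ i) (by rw [fwdDiff_iter_pow_eq_zero_of_lt hi]; simp), mul_zero]
  · intro hD
    rw [notMem_support_iff.mp hD, zero_mul]

end AlternatingBoxSum

section GraphPolynomial

variable {V : Type} [Fintype V] [LinearOrder V] (G : SimpleGraph V) [DecidableRel G.Adj]

lemma eval_graphPoly_eq_zero {x : V → ℝ} {i j : V} (hij : G.Adj i j) (hx : x i = x j) :
    eval x (graphPoly G) = 0 := by
  rw [graphPoly, map_prod]
  rcases hij.ne.lt_or_gt with hlt | hgt
  · exact prod_eq_zero (i := (i, j)) (by simp [hlt, hij]) (by simp [hx])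
  · exact prod_eq_zero (i := (j, i)) (by simp [hgt, hij.symm]) (by simp [hx])

lemma card_filter_lt_adj_eq_card_edgeFinset :
    #{p : V × V | p.1 < p.2 ∧ G.Adj p.1 p.2} = #G.edgeFinset := by
  refine card_bij (fun p _ => s(p.1, p.2)) (fun p hp => ?_) (fun p hp q hq hpq => ?_) fun e he => ?_
  · simpa using (mem_filter.mp hp).2.2
  · simp only [mem_filter, mem_univ, true_and] at hp hq
    rcases Sym2.mk_eq_mk_iff.mp hpq with h | h
    · exact h
    · subst h
      exact absurd hp.1 hq.1.not_gt
  · induction e with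
    | _ a b =>
      have hab : G.Adj a b := SimpleGraph.mem_edgeFinset.mp he
      rcases hab.ne.lt_or_gt with hlt | hgt
      · exact ⟨(a, b), by simp [hlt, hab], rfl⟩
      · exact ⟨(b, a), by simp [hgt, hab.symm], Sym2.eq_swap⟩

lemma totalDegree_graphPoly_le : (graphPoly G).totalDegree ≤ #G.edgeFinset := by
  rw [← card_filter_lt_adj_eq_card_edgeFinset, card_eq_sum_ones]
  refine (totalDegree_finsetProd _ _).trans (sum_le_sum fun p _ => ?_)
  exact (totalDegree_sub _ _).trans (by simp)

end GraphPolynomial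

/-- Theorem (signed colorings characterization). For a graph `G` on `{1,…,n}` with `m` edges and
`f : V → ℕ⁺` with `∑ f(i) = m + n`, the coefficient of `∏ xᵢ^{f(i)-1}` in `P_G` is non-zero iff
`∑_{c ∈ C_f} (-1)^{∑ c(i)} ∏ C(f(i)-1, c(i)) · P_G(c(1),…,c(n)) ≠ 0`, where `C_f` is the set of
proper colorings of `G` with colors `{0,…,maxᵢ f(i) - 1}`. -/
theorem coeff_ne_zero_iff_signed_coloring_sum (n : ℕ) (G : SimpleGraph (Fin n))
    [DecidableRel G.Adj] (f : Fin n → ℕ) (hf : ∀ i, 1 ≤ f i)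
    (hsum : ∑ i, f i = G.edgeFinset.card + n) :
    (graphPoly G).coeff (Finsupp.equivFunOnFinite.symm fun i => f i - 1) ≠ 0 ↔
      ∑ c ∈ (Fintype.piFinset fun _ : Fin n => Finset.range (Finset.univ.sup f)).filter
          (fun c => ∀ i j, G.Adj i j → c i ≠ c j),
        (-1 : ℝ) ^ (∑ i, c i) * (∏ i, ((f i - 1).choose (c i) : ℝ)) *
          MvPolynomial.eval (fun i => (c i : ℝ)) (graphPoly G) ≠ 0 := by
  have hdN : ∀ i, f i - 1 < univ.sup f := fun i =>
    (Nat.sub_lt (hf i) one_pos).trans_le (le_sup (mem_univ i))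
  have hdeg : (graphPoly G).totalDegree ≤ ∑ i, (f i - 1) := by
    have hshift : ∑ i, (f i - 1) + n = ∑ i, f i := by
      simpa [sum_add_distrib] using
        sum_congr (s₁ := univ) rfl fun i _ => Nat.sub_add_cancel (hf i)
    exact (totalDegree_graphPoly_le G).trans (by omega)
  rw [sum_filter_of_ne, sum_piFinset_alternating_choose_mul_eval_of_totalDegree_le _ hdN hdeg,
    mul_ne_zero_iff_right (prod_ne_zero_iff.mpr fun i _ => by positivity)]
  intro c _ hc i j hij hcij
  exact right_ne_zero_of_mul hc (eval_graphPoly_eq_zero G hij (by rw [hcij]))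
end

section
/- Let G be a graph on vertices {v_1,...,v_n} and let D be an orientation of G in which v_i has out-degree d_i. For each i and each 1 ≤ j ≤ d_i fix an arbitrary real number u^i_j. Then the coefficient of ∏_{i=1}^n x_i^{d_i} in the graph polynomial P_G is nonzero if and only if ∑_{A ⊆ E(D)} (-1)^{|A|} ∏_{i=1}^n ∏_{j=1}^{d_i} ((d_A^+(v_i) − d_A^−(v_i)) − u^i_j) ≠ 0. -/
open MvPolynomial Finset

/-- Out-degree of `v` in a set `A` of arcs. -/
def outdeg {n : ℕ} (A : Finset (Fin n × Fin n)) (v : Fin n) : ℕ :=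
  (A.filter fun e => e.1 = v).card

/-- In-degree of `v` in a set `A` of arcs. -/
def indeg {n : ℕ} (A : Finset (Fin n × Fin n)) (v : Fin n) : ℕ :=
  (A.filter fun e => e.2 = v).card

/-!
Adding an arc `(a, b)` to the arc set shifts the arguments of `pₐ` by `+1` and of `p_b` by `-1`, so
the alternating sum over `insert (a, b) E` is the alternating sum over `E` of a difference of
products, which telescopes into one finite difference `p - p(· + r)` at `b` and one at `a`. For
`deg p ≤ k` such a difference has degree `≤ k - 1`, and `(k - 1)!` times its coefficient of
`x^(k-1)` is `-r` times `k!` times the coefficient of `x^k` in `p`. By induction over the arcs,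
for arbitrary `pᵢ` of degree `≤ dᵢ` with `∑ dᵢ = |E|`,
  `∑_{A ⊆ E} (-1)^|A| ∏ᵢ pᵢ(d_A⁺(vᵢ) - d_A⁻(vᵢ))`
    `= (-1)^|E| ∏ᵢ (dᵢ! [x^dᵢ] pᵢ) · [x^d] ∏_{(a,b) ∈ E} (x_a - x_b)`.
Take `pᵢ = ∏ⱼ (x - u^i_j)`; the arc product of the orientation `D` is `±P_G`.
-/

open scoped Polynomial Nat

namespace Polynomial

variable {R : Type*}

theorem coeff_taylor_of_natDegree_le [Semiring R] {p : R[X]} {m : ℕ} (h : p.natDegree ≤ m)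
    (r : R) : (taylor r p).coeff m = p.coeff m := by
  rcases h.eq_or_lt with rfl | hlt
  · exact coeff_taylor_natDegree r p
  · rw [coeff_eq_zero_of_natDegree_lt hlt,
      coeff_eq_zero_of_natDegree_lt (by rwa [natDegree_taylor])]

theorem natDegree_sub_taylor_le [Ring R] {p : R[X]} {d : ℕ} (h : p.natDegree ≤ d) (r : R) :
    (p - taylor r p).natDegree ≤ d - 1 := by
  rw [natDegree_le_iff_coeff_eq_zero]
  intro m hm
  rw [coeff_sub, coeff_taylor_of_natDegree_le (by omega) r, sub_self]

theorem coeff_taylor_pred [CommSemiring R] {p : R[X]} {d : ℕ} (h : p.natDegree ≤ d) (hd : d ≠ 0)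
    (r : R) : (taylor r p).coeff (d - 1) = p.coeff (d - 1) + d * p.coeff d * r := by
  have hlin : (hasseDeriv (d - 1) p).natDegree ≤ 1 :=
    (natDegree_hasseDeriv_le _ _).trans (by omega)
  rw [taylor_coeff, eq_X_add_C_of_natDegree_le_one hlin]
  simp only [eval_add, eval_mul, eval_C, eval_X, hasseDeriv_coeff, zero_add,
    Nat.choose_self, Nat.cast_one, one_mul, show 1 + (d - 1) = d by omega]
  rw [Nat.choose_symm_of_eq_add (by omega : d = (d - 1) + 1), Nat.choose_one_right]
  ring

theorem factorial_mul_coeff_sub_taylor_pred [CommRing R] {p : R[X]} {d : ℕ}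
    (h : p.natDegree ≤ d) (hd : d ≠ 0) (r : R) :
    ((d - 1)! : R) * (p - taylor r p).coeff (d - 1) = -r * ((d ! : R) * p.coeff d) := by
  rw [coeff_sub, coeff_taylor_pred h hd, ← Nat.mul_factorial_pred hd]
  push_cast
  ring

end Polynomial

section ArcSets

variable {n : ℕ}

theorem sum_outdeg (A : Finset (Fin n × Fin n)) : ∑ v, outdeg A v = A.card :=
  (card_eq_sum_card_fiberwise fun e _ => mem_univ e.1).symm

def netDeg (A : Finset (Fin n × Fin n)) (v : Fin n) : ℝ :=
  (outdeg A v : ℝ) - indeg A v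

theorem netDeg_union {A B : Finset (Fin n × Fin n)} (h : Disjoint A B) (v : Fin n) :
    netDeg (A ∪ B) v = netDeg A v + netDeg B v := by
  simp only [netDeg, outdeg, indeg, filter_union,
    card_union_of_disjoint (disjoint_filter_filter h)]
  push_cast
  ring

theorem netDeg_singleton {e : Fin n × Fin n} (he : e.1 ≠ e.2) (v : Fin n) :
    netDeg {e} v = if v = e.1 then 1 else if v = e.2 then -1 else 0 := by
  by_cases h1 : v = e.1 <;> by_cases h2 : v = e.2 <;>
    simp [netDeg, outdeg, indeg, filter_singleton, h1, h2, eq_comm, he]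

noncomputable def altSum (E : Finset (Fin n × Fin n)) (p : Fin n → ℝ[X]) : ℝ :=
  ∑ A ∈ E.powerset, (-1) ^ A.card * ∏ i, (p i).eval (netDeg A i)

theorem altSum_insert {E : Finset (Fin n × Fin n)} {e : Fin n × Fin n} (he : e ∉ E)
    (p : Fin n → ℝ[X]) :
    altSum (insert e E) p =
      altSum E p - altSum E fun i => Polynomial.taylor (netDeg {e} i) (p i) := by
  rw [altSum, sum_powerset_insert he, altSum, altSum, sub_eq_add_neg, ← sum_neg_distrib]
  congr 1
  refine sum_congr rfl fun A hA => ?_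
  have heA : e ∉ A := fun h => he (mem_powerset.1 hA h)
  rw [card_insert_of_notMem heA, pow_succ, insert_eq]
  simp only [netDeg_union (disjoint_singleton_left.2 heA), Polynomial.taylor_eval, add_comm]
  ring

theorem prod_eval_update (p : Fin n → ℝ[X]) (i : Fin n) (q : ℝ[X]) (x : Fin n → ℝ) :
    ∏ j, (Function.update p i q j).eval (x j) =
      q.eval (x i) * ∏ j ∈ univ.erase i, (p j).eval (x j) := by
  rw [← mul_prod_erase univ _ (mem_univ i), Function.update_self]
  congr 1
  exact prod_congr rfl fun j hj => by rw [Function.update_of_ne (ne_of_mem_erase hj)]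

theorem altSum_update_sub (E : Finset (Fin n × Fin n)) (p : Fin n → ℝ[X]) (i : Fin n)
    (q r : ℝ[X]) :
    altSum E (Function.update p i (q - r)) =
      altSum E (Function.update p i q) - altSum E (Function.update p i r) := by
  simp only [altSum, prod_eval_update, Polynomial.eval_sub, ← sum_sub_distrib]
  exact sum_congr rfl fun A _ => by ring

theorem altSum_sub_altSum_update (E : Finset (Fin n × Fin n)) (p : Fin n → ℝ[X]) (i : Fin n)
    (r : ℝ[X]) :
    altSum E p - altSum E (Function.update p i r) = altSum E (Function.update p i (p i - r)) := by
  rw [altSum_update_sub, Function.update_eq_self]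

theorem altSum_update_zero (E : Finset (Fin n × Fin n)) (p : Fin n → ℝ[X]) (i : Fin n) :
    altSum E (Function.update p i 0) = 0 := by
  simp [altSum, prod_eval_update]

noncomputable def leadFactor (d : Fin n →₀ ℕ) (p : Fin n → ℝ[X]) : ℝ :=
  ∏ i, ((d i)! : ℝ) * (p i).coeff (d i)

theorem leadFactor_update_taylor {d : Fin n →₀ ℕ} {p : Fin n → ℝ[X]} {i : Fin n}
    (h : (p i).natDegree ≤ d i) (r : ℝ) :
    leadFactor d (Function.update p i (Polynomial.taylor r (p i))) = leadFactor d p := by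
  refine prod_congr rfl fun j _ => ?_
  rcases eq_or_ne j i with rfl | hj
  · rw [Function.update_self, Polynomial.coeff_taylor_of_natDegree_le h]
  · rw [Function.update_of_ne hj]

theorem leadFactor_update_sub_taylor {d : Fin n →₀ ℕ} {p : Fin n → ℝ[X]} {i : Fin n}
    (h : (p i).natDegree ≤ d i) (hd : d i ≠ 0) (r : ℝ) :
    leadFactor (d - Finsupp.single i 1) (Function.update p i (p i - Polynomial.taylor r (p i))) =
      -r * leadFactor d p := by
  rw [leadFactor, leadFactor, ← mul_prod_erase univ _ (mem_univ i),
    ← mul_prod_erase univ _ (mem_univ i), ← mul_assoc]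
  congr 1
  · simpa [Function.update_self] using Polynomial.factorial_mul_coeff_sub_taylor_pred h hd r
  · refine prod_congr rfl fun j hj => ?_
    have hji := ne_of_mem_erase hj
    simp [Function.update_of_ne hji, Finsupp.single_eq_of_ne hji]

noncomputable def arcPoly (E : Finset (Fin n × Fin n)) : MvPolynomial (Fin n) ℝ :=
  ∏ e ∈ E, (X e.1 - X e.2)

theorem arcPoly_insert {E : Finset (Fin n × Fin n)} {e : Fin n × Fin n} (he : e ∉ E) :
    arcPoly (insert e E) = (X e.1 - X e.2) * arcPoly E :=
  prod_insert he

theorem altSum_update_sub_taylor {E : Finset (Fin n × Fin n)}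
    (hE : ∀ (p : Fin n → ℝ[X]) (d : Fin n →₀ ℕ), (∀ i, (p i).natDegree ≤ d i) →
      d.degree = E.card → altSum E p = (-1) ^ E.card * leadFactor d p * coeff d (arcPoly E))
    {p : Fin n → ℝ[X]} {d : Fin n →₀ ℕ} (hp : ∀ i, (p i).natDegree ≤ d i)
    (hd : d.degree = E.card + 1) (i : Fin n) (r : ℝ) :
    altSum E (Function.update p i (p i - Polynomial.taylor r (p i))) =
      -r * ((-1) ^ E.card * leadFactor d p * coeff d (arcPoly E * X i)) := by
  by_cases hdi : d i = 0
  · have hconst : p i - Polynomial.taylor r (p i) = 0 := by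
      have h0 : (p i).natDegree = 0 := Nat.le_zero.1 (hdi ▸ hp i)
      rw [Polynomial.eq_C_of_natDegree_eq_zero h0, Polynomial.taylor_C, sub_self]
    rw [hconst, altSum_update_zero, coeff_mul_X', if_neg (by simpa using hdi)]
    ring
  · have hle : Finsupp.single i 1 ≤ d :=
      Finsupp.single_le_iff.2 (Nat.one_le_iff_ne_zero.2 hdi)
    have hdeg : (d - Finsupp.single i 1).degree = E.card := by
      have := congrArg Finsupp.degree (tsub_add_cancel_of_le hle)
      rw [map_add, Finsupp.degree_single] at this
      omega
    have hp' : ∀ j, (Function.update p i (p i - Polynomial.taylor r (p i)) j).natDegree ≤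
        (d - Finsupp.single i 1 : Fin n →₀ ℕ) j := by
      intro j
      rcases eq_or_ne j i with rfl | hj
      · simpa using Polynomial.natDegree_sub_taylor_le (hp j) r
      · simpa [Function.update_of_ne hj, Finsupp.single_eq_of_ne hj] using hp j
    rw [hE _ _ hp' hdeg, leadFactor_update_sub_taylor (hp i) hdi, coeff_mul_X',
      if_pos (by simpa using hdi)]
    ring

theorem altSum_eq_leadFactor_mul_coeff_arcPoly {E : Finset (Fin n × Fin n)}
    (hE : ∀ e ∈ E, e.1 ≠ e.2) (p : Fin n → ℝ[X]) (d : Fin n →₀ ℕ)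
    (hp : ∀ i, (p i).natDegree ≤ d i) (hd : d.degree = E.card) :
    altSum E p = (-1) ^ E.card * leadFactor d p * coeff d (arcPoly E) := by
  induction E using Finset.induction_on generalizing p d with
  | empty =>
    obtain rfl : d = 0 := (Finsupp.degree_eq_zero_iff d).1 hd
    simp [altSum, leadFactor, arcPoly, netDeg, outdeg, indeg, Polynomial.coeff_zero_eq_eval_zero]
  | insert e E he ih =>
    have hloop : e.1 ≠ e.2 := hE e (mem_insert_self e E)
    have ih := ih fun e' h => hE e' (mem_insert_of_mem h)
    rw [card_insert_of_notMem he] at hd ⊢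
    set p' := Function.update p e.2 (Polynomial.taylor (-1) (p e.2))
    have hp' : ∀ i, (p' i).natDegree ≤ d i := fun i => by
      rcases eq_or_ne i e.2 with rfl | hi
      · simpa [p'] using hp _
      · simpa [p', Function.update_of_ne hi] using hp i
    have hshift : (fun i => Polynomial.taylor (netDeg {e} i) (p i)) =
        Function.update p' e.1 (Polynomial.taylor 1 (p' e.1)) := by
      funext i
      rw [netDeg_singleton hloop]
      by_cases h1 : i = e.1 <;> by_cases h2 : i = e.2 <;>
        simp [p', h1, h2, hloop, hloop.symm]
    rw [altSum_insert he, hshift, ← sub_add_sub_cancel _ (altSum E p'), altSum_sub_altSum_update,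
      altSum_sub_altSum_update, altSum_update_sub_taylor ih hp hd,
      altSum_update_sub_taylor ih hp' hd, leadFactor_update_taylor (hp e.2), arcPoly_insert he,
      mul_sub_right_distrib, coeff_sub, mul_comm (X e.1), mul_comm (X e.2)]
    ring

end ArcSets

theorem arcPoly_eq_C_mul_graphPoly {n : ℕ} {G : SimpleGraph (Fin n)} [DecidableRel G.Adj]
    {D : Finset (Fin n × Fin n)} (hD1 : ∀ e ∈ D, G.Adj e.1 e.2)
    (hD2 : ∀ i j, G.Adj i j → ((i, j) ∈ D ∨ (j, i) ∈ D))
    (hD3 : ∀ i j, (i, j) ∈ D → (j, i) ∉ D) :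
    arcPoly D = C (∏ e ∈ D, if e.1 < e.2 then (1 : ℝ) else -1) * graphPoly G := by
  let σ : Fin n × Fin n → Fin n × Fin n := fun e => if e.1 < e.2 then e else e.swap
  have hfactor : ∀ e ∈ D, (X e.1 - X e.2 : MvPolynomial (Fin n) ℝ) =
      C (if e.1 < e.2 then 1 else -1) * (X (σ e).1 - X (σ e).2) := by
    intro e _
    simp only [σ]
    split_ifs <;> simp
  rw [arcPoly, prod_congr rfl hfactor, prod_mul_distrib, map_prod, graphPoly]
  congr 1
  refine prod_nbij σ ?_ ?_ ?_ fun _ _ => rfl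
  · intro e he
    have hadj := hD1 e he
    simp only [σ, mem_filter, mem_univ, true_and]
    split_ifs with h
    · exact ⟨h, hadj⟩
    · exact ⟨lt_of_le_of_ne (not_lt.1 h) hadj.ne', hadj.symm⟩
  · intro a ha b hb hab
    simp only [σ] at hab
    split_ifs at hab with h1 h2 h2
    · exact hab
    · subst hab
      exact absurd ha (hD3 b.1 b.2 hb)
    · subst hab
      exact absurd hb (hD3 a.1 a.2 ha)
    · exact Prod.swap_injective hab
  · rintro q hq
    obtain ⟨hlt, hadj⟩ := by simpa using hq
    rcases hD2 q.1 q.2 hadj with h | h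
    · exact ⟨q, h, if_pos hlt⟩
    · exact ⟨(q.2, q.1), h, by simp [σ, not_lt_of_gt hlt]⟩

/-- The weights `u i j`, `j ∈ range (d i)`, stand for `u^i_1, …, u^i_{dᵢ}`. -/
theorem alon_tarsi_weighted (n : ℕ) (G : SimpleGraph (Fin n)) [DecidableRel G.Adj]
    (D : Finset (Fin n × Fin n))
    (hD1 : ∀ e ∈ D, G.Adj e.1 e.2)
    (hD2 : ∀ i j, G.Adj i j → ((i, j) ∈ D ∨ (j, i) ∈ D))
    (hD3 : ∀ i j, (i, j) ∈ D → (j, i) ∉ D)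
    (d : Fin n → ℕ) (hd : ∀ v, outdeg D v = d v)
    (u : Fin n → ℕ → ℝ) :
    (graphPoly G).coeff (Finsupp.equivFunOnFinite.symm d) ≠ 0 ↔
      ∑ A ∈ D.powerset, (-1 : ℝ) ^ A.card *
        ∏ i, ∏ j ∈ Finset.range (d i),
          (((outdeg A i : ℝ) - (indeg A i : ℝ)) - u i j) ≠ 0 := by
  let p : Fin n → ℝ[X] := fun i => ∏ j ∈ range (d i), (Polynomial.X - Polynomial.C (u i j))
  have hp_monic : ∀ i, (p i).Monic := fun i =>
    Polynomial.monic_prod_of_monic _ _ fun j _ => Polynomial.monic_X_sub_C (u i j)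
  have hp_deg : ∀ i, (p i).natDegree = d i := fun i => by
    simp [p, Polynomial.natDegree_prod_of_monic _ _ fun j _ => Polynomial.monic_X_sub_C (u i j)]
  set t := Finsupp.equivFunOnFinite.symm d
  have ht_deg : t.degree = D.card := by
    simp [t, Finsupp.degree_eq_sum, ← sum_outdeg D, hd]
  have hlead : leadFactor t p ≠ 0 := prod_ne_zero_iff.2 fun i _ => by
    simp [t, ← hp_deg i, (hp_monic i).coeff_natDegree, Nat.factorial_ne_zero]
  have key := altSum_eq_leadFactor_mul_coeff_arcPoly (fun e he => (hD1 e he).ne) p t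
    (fun i => (hp_deg i).le) ht_deg
  rw [arcPoly_eq_C_mul_graphPoly hD1 hD2 hD3, coeff_C_mul] at key
  have hsum : altSum D p = ∑ A ∈ D.powerset, (-1 : ℝ) ^ A.card *
      ∏ i, ∏ j ∈ range (d i), (((outdeg A i : ℝ) - (indeg A i : ℝ)) - u i j) := by
    simp [altSum, netDeg, p, Polynomial.eval_prod]
  have hsign : (∏ e ∈ D, if e.1 < e.2 then (1 : ℝ) else -1) ≠ 0 :=
    prod_ne_zero_iff.2 fun e _ => by split_ifs <;> norm_num
  rw [← hsum, key]
  simp [hlead, hsign]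
end

section
/- Let G be a graph on vertices {v_1,...,v_n}, and let D be an orientation of G in which v_i has out-degree d_i. Then the coefficient of ∏_{i=1}^n x_i^{d_i} in the graph polynomial P_G(x_1,...,x_n) = ∏_{(i,j)∈E, i<j}(x_i − x_j) is nonzero if and only if the number of spanning eulerian subdigraphs of D with an even number of arcs differs from the number with an odd number of arcs. -/
open MvPolynomial Finset

/-!
Orienting every edge as in `D` turns `P_G` into `±∏_{(u,v) ∈ D} (x_u - x_v)`, the sign counting
the arcs of `D` that point downwards. Expanding this product, a choice of the subset `B ⊆ D` of
factors contributing `-x_v` gives the monomial with exponents `outdeg (D \ B) + indeg B` and sign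
`(-1)^|B|`; since `outdeg D = outdeg (D \ B) + outdeg B`, it is `∏ x_i^{d_i}` exactly when `B` is
eulerian. Hence the coefficient is `±(#even eulerian B - #odd eulerian B)`.
-/

section ProdXSubX

variable {V R : Type*} [CommRing R]

lemma prod_X_eq_monomial {α : Type*} (s : Finset α) (f : α → V) :
    ∏ e ∈ s, (X (f e) : MvPolynomial V R) =
      monomial (∑ e ∈ s, Finsupp.single (f e) 1) 1 := by
  rw [monomial_sum_one]
  rfl

lemma prod_X_sub_X_eq_sum_powerset [DecidableEq V] (D : Finset (V × V)) :
    ∏ e ∈ D, (X e.1 - X e.2 : MvPolynomial V R) =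
      ∑ B ∈ D.powerset,
        monomial (∑ e ∈ D \ B, Finsupp.single e.1 1 + ∑ e ∈ B, Finsupp.single e.2 1)
          ((-1) ^ #B) := by
  have h : ∀ e : V × V, (X e.1 - X e.2 : MvPolynomial V R) = C (-1) * X e.2 + X e.1 := by
    intro e; rw [C_neg, C_1]; ring
  simp_rw [h, prod_add, prod_mul_distrib, prod_const, prod_X_eq_monomial, ← C_pow,
    C_mul_monomial, monomial_mul, mul_one, add_comm]

end ProdXSubX

section Degrees

variable {n : ℕ}

lemma sum_single_fst_apply (A : Finset (Fin n × Fin n)) (v : Fin n) :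
    (∑ e ∈ A, Finsupp.single e.1 1 : Fin n →₀ ℕ) v = outdeg A v := by
  rw [outdeg, card_filter, Finsupp.finsetSum_apply]
  simp [Finsupp.single_apply]

lemma sum_single_snd_apply (A : Finset (Fin n × Fin n)) (v : Fin n) :
    (∑ e ∈ A, Finsupp.single e.2 1 : Fin n →₀ ℕ) v = indeg A v := by
  rw [indeg, card_filter, Finsupp.finsetSum_apply]
  simp [Finsupp.single_apply]

lemma outdeg_sdiff_add_outdeg {A D : Finset (Fin n × Fin n)} (h : A ⊆ D) (v : Fin n) :
    outdeg (D \ A) v + outdeg A v = outdeg D v := by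
  rw [outdeg, outdeg, outdeg, ← card_union_of_disjoint (disjoint_filter_filter sdiff_disjoint),
    ← filter_union, sdiff_union_of_subset h]

lemma sum_single_eq_outdeg_iff {B D : Finset (Fin n × Fin n)} (h : B ⊆ D) :
    ∑ e ∈ D \ B, Finsupp.single e.1 1 + ∑ e ∈ B, Finsupp.single e.2 1 =
        Finsupp.equivFunOnFinite.symm (outdeg D) ↔ ∀ v, outdeg B v = indeg B v := by
  simp only [Finsupp.ext_iff, Finsupp.add_apply, sum_single_fst_apply, sum_single_snd_apply,
    Finsupp.coe_equivFunOnFinite_symm, ← outdeg_sdiff_add_outdeg h, add_right_inj, eq_comm]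

lemma coeff_outdeg_prod_X_sub_X {R : Type*} [CommRing R] (D : Finset (Fin n × Fin n)) :
    coeff (Finsupp.equivFunOnFinite.symm (outdeg D))
        (∏ e ∈ D, (X e.1 - X e.2 : MvPolynomial (Fin n) R)) =
      ∑ B ∈ D.powerset with ∀ v, outdeg B v = indeg B v, (-1) ^ #B := by
  rw [prod_X_sub_X_eq_sum_powerset, coeff_sum, sum_filter]
  refine sum_congr rfl fun B hB => ?_
  rw [coeff_monomial]
  exact if_congr (sum_single_eq_outdeg_iff (mem_powerset.1 hB)) rfl rfl

end Degrees

lemma sum_neg_one_pow_card {α R : Type*} [Ring R] (S : Finset (Finset α)) :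
    ∑ B ∈ S, (-1 : R) ^ #B = #{B ∈ S | Even #B} - #{B ∈ S | Odd #B} := by
  rw [← sum_filter_add_sum_filter_not S (fun B => Even #B)]
  simp_rw [Nat.not_even_iff_odd]
  have h_even : ∀ B ∈ S.filter (fun B => Even #B), (-1 : R) ^ #B = 1 :=
    fun B hB => (mem_filter.1 hB).2.neg_one_pow
  have h_odd : ∀ B ∈ S.filter (fun B => Odd #B), (-1 : R) ^ #B = -1 :=
    fun B hB => (mem_filter.1 hB).2.neg_one_pow
  rw [sum_congr rfl h_even, sum_congr rfl h_odd]
  simp [sub_eq_add_neg]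

lemma graphPoly_eq_neg_one_pow_mul_prod {V : Type} [Fintype V] [LinearOrder V]
    (G : SimpleGraph V) [DecidableRel G.Adj] (D : Finset (V × V))
    (hD1 : ∀ e ∈ D, G.Adj e.1 e.2)
    (hD2 : ∀ i j, G.Adj i j → ((i, j) ∈ D ∨ (j, i) ∈ D))
    (hD3 : ∀ i j, (i, j) ∈ D → (j, i) ∉ D) :
    graphPoly G = (-1) ^ #{e ∈ D | e.2 < e.1} * ∏ e ∈ D, (X e.1 - X e.2) := by
  have h : graphPoly G = ∏ e ∈ D, (if e.2 < e.1 then -1 else 1) * (X e.1 - X e.2) := by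
    -- an edge `p` with `p.1 < p.2` corresponds to whichever of `p`, `p.swap` is an arc of `D`
    refine prod_nbij' (fun p => if p ∈ D then p else p.swap)
      (fun e => if e.1 < e.2 then e else e.swap) ?_ ?_ ?_ ?_ ?_
    · intro p hp
      simp only [mem_filter, mem_univ, true_and] at hp
      have := hD2 _ _ hp.2
      split_ifs <;> grind
    · intro e he
      have := (hD1 e he).ne
      simp only [mem_filter, mem_univ, true_and]
      split_ifs <;> grind [SimpleGraph.adj_symm]
    · intro p hp
      simp only [mem_filter, mem_univ, true_and] at hp
      grind
    · intro e he
      grind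
    · intro p hp
      simp only [mem_filter, mem_univ, true_and] at hp
      split_ifs <;> grind
  rw [h, prod_mul_distrib, prod_ite, prod_const, prod_const_one, mul_one]

/-- **The Alon–Tarsi theorem.** Let `D` be an orientation of `G` with out-degrees `d`.  The
coefficient of `∏ xᵢ^{dᵢ}` in `P_G` is non-zero iff the number of spanning eulerian subdigraphs
of `D` with an even number of arcs differs from the number with an odd number of arcs. -/
theorem alon_tarsi (n : ℕ) (G : SimpleGraph (Fin n)) [DecidableRel G.Adj]
    (D : Finset (Fin n × Fin n))
    (hD1 : ∀ e ∈ D, G.Adj e.1 e.2)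
    (hD2 : ∀ i j, G.Adj i j → ((i, j) ∈ D ∨ (j, i) ∈ D))
    (hD3 : ∀ i j, (i, j) ∈ D → (j, i) ∉ D)
    (d : Fin n → ℕ) (hd : ∀ v, outdeg D v = d v) :
    (graphPoly G).coeff (Finsupp.equivFunOnFinite.symm d) ≠ 0 ↔
      (D.powerset.filter fun A => (∀ v, outdeg A v = indeg A v) ∧ Even A.card).card ≠
        (D.powerset.filter fun A => (∀ v, outdeg A v = indeg A v) ∧ Odd A.card).card := by
  obtain rfl : outdeg D = d := funext hd
  rw [graphPoly_eq_neg_one_pow_mul_prod G D hD1 hD2 hD3, ← C_1, ← C_neg, ← C_pow, coeff_C_mul,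
    coeff_outdeg_prod_X_sub_X, sum_neg_one_pow_card, filter_filter, filter_filter]
  simp [sub_eq_zero]
end

section
/- For every graph G, ch(G) ≤ AT(G), i.e., if the graph polynomial P_G contains a monomial ∏ x_i^{t_i} with nonzero coefficient and t_i ≤ k−1 for all i, then G is k-choosable: for any assignment of lists L(v) ⊆ ℝ with |L(v)| ≥ k, G admits a proper coloring choosing each vertex's color from its list. -/
open MvPolynomial Finset

section GraphPoly

variable {V : Type} [Fintype V] [LinearOrder V] (G : SimpleGraph V) [DecidableRel G.Adj]

theorem isHomogeneous_graphPoly :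
    (graphPoly G).IsHomogeneous #{p : V × V | p.1 < p.2 ∧ G.Adj p.1 p.2} := by
  simpa [graphPoly] using IsHomogeneous.prod _
    (fun p : V × V => (X p.1 - X p.2 : MvPolynomial V ℝ)) (fun _ => 1)
    fun p _ => (isHomogeneous_X ℝ p.1).sub (isHomogeneous_X ℝ p.2)

theorem totalDegree_graphPoly_of_coeff_ne_zero {t : V →₀ ℕ} (ht : (graphPoly G).coeff t ≠ 0) :
    (graphPoly G).totalDegree = t.degree := by
  have hdeg : t.degree = #{p : V × V | p.1 < p.2 ∧ G.Adj p.1 p.2} := by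
    by_contra h
    exact ht ((isHomogeneous_graphPoly G).coeff_eq_zero h)
  rw [hdeg, (isHomogeneous_graphPoly G).totalDegree]
  intro h
  simp [h] at ht

theorem eval_graphPoly_ne_zero_iff (c : V → ℝ) :
    eval c (graphPoly G) ≠ 0 ↔ ∀ u v, G.Adj u v → c u ≠ c v := by
  simp only [graphPoly, map_prod, map_sub, eval_X, ne_eq, prod_eq_zero_iff, mem_filter,
    mem_univ, true_and, sub_eq_zero, not_exists, not_and, Prod.forall]
  refine ⟨fun h u v huv hc => ?_, fun h u v ⟨_, huv⟩ => h u v huv⟩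
  rcases lt_trichotomy u v with huv' | rfl | huv'
  · exact h u v ⟨huv', huv⟩ hc
  · exact G.loopless.irrefl u huv
  · exact h v u ⟨huv', huv.symm⟩ hc.symm

end GraphPoly

/-- `ch(G) ≤ AT(G)`: if `P_G` has a monomial `∏ xᵢ^{tᵢ}` with non-zero coefficient and
`tᵢ ≤ k - 1` for all `i`, then `G` is `k`-choosable. -/
theorem choosable_of_AT (n k : ℕ) (G : SimpleGraph (Fin n)) [DecidableRel G.Adj]
    (t : Fin n → ℕ)
    (h1 : (graphPoly G).coeff (Finsupp.equivFunOnFinite.symm t) ≠ 0)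
    (h2 : ∀ i, t i + 1 ≤ k)
    (L : Fin n → Finset ℝ) (hL : ∀ v, k ≤ (L v).card) :
    ∃ c : Fin n → ℝ, (∀ v, c v ∈ L v) ∧ ∀ u v, G.Adj u v → c u ≠ c v := by
  obtain ⟨c, hcL, hc⟩ := combinatorial_nullstellensatz_exists_eval_nonzero (graphPoly G)
    (Finsupp.equivFunOnFinite.symm t) h1
    (totalDegree_graphPoly_of_coeff_ne_zero G h1) L fun i => (h2 i).trans (hL i)
  exact ⟨c, hcL, (eval_graphPoly_ne_zero_iff G c).mp hc⟩
end

section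
/- For every graph G, AT(G) ≥ 1 + ⌈m(G)⌉, where m(G) = max{ e(H)/v(H) : H a nonempty subgraph of G } is the maximum density of G. -/
open MvPolynomial Finset

/-!
Let `t` be an exponent with nonzero coefficient in `P_G` and `t i ≤ k - 1` for all `i`. Every
monomial of `∏ (xᵢ - xⱼ)` picks one endpoint of each edge, so for any vertex set `S` the total
exponent `∑_{i ∈ S} t i` is at least the number of edges inside `S`: the weighted order of `P_G`
for the weight `1_S` is at least the sum of those of its factors. Taking `S = V(H)` gives
`e(H) ≤ (k - 1) v(H)`, i.e. `e(H) / v(H) ≤ AT(G) - 1`.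
-/

namespace MvPowerSeries

variable {σ R : Type*} [Ring R]

theorem min_le_weightedOrder_X_sub_X (w : σ → ℕ) (a b : σ) :
    (min (w a) (w b) : ℕ∞) ≤ (X a - X b : MvPowerSeries σ R).weightedOrder w := by
  classical
  refine nat_le_weightedOrder w fun d hd => ?_
  have ha : d ≠ Finsupp.single a 1 := by rintro rfl; simp [Finsupp.weight_single] at hd
  have hb : d ≠ Finsupp.single b 1 := by rintro rfl; simp [Finsupp.weight_single] at hd
  simp [coeff_X, ha, hb]

end MvPowerSeries

namespace MvPolynomial

variable {σ R : Type*} [CommRing R]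

theorem sum_min_le_weight_of_coeff_prod_X_sub_X_ne_zero (w : σ → ℕ) (F : Finset (σ × σ))
    {t : σ →₀ ℕ} (ht : coeff t (∏ p ∈ F, (X p.1 - X p.2 : MvPolynomial σ R)) ≠ 0) :
    ∑ p ∈ F, min (w p.1) (w p.2) ≤ Finsupp.weight w t := by
  set P : MvPolynomial σ R := ∏ p ∈ F, (X p.1 - X p.2)
  have hP : (P : MvPowerSeries σ R) = ∏ p ∈ F, (MvPowerSeries.X p.1 - MvPowerSeries.X p.2) := by
    simp only [P, ← coeToMvPowerSeries.ringHom_apply, map_prod, map_sub]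
    simp only [coeToMvPowerSeries.ringHom_apply, coe_X]
  have := calc
    ((∑ p ∈ F, min (w p.1) (w p.2) : ℕ) : ℕ∞)
        ≤ ∑ p ∈ F, (MvPowerSeries.X (R := R) p.1 - MvPowerSeries.X p.2).weightedOrder w := by
          push_cast
          exact sum_le_sum fun p _ => MvPowerSeries.min_le_weightedOrder_X_sub_X w p.1 p.2
    _ ≤ (P : MvPowerSeries σ R).weightedOrder w := hP ▸ MvPowerSeries.le_weightedOrder_prod w _ F
    _ ≤ Finsupp.weight w t := MvPowerSeries.weightedOrder_le w (by rwa [coeff_coe])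
  exact_mod_cast this

theorem card_filter_le_sum_of_coeff_prod_X_sub_X_ne_zero [Fintype σ] [DecidableEq σ]
    (S : Finset σ) (F : Finset (σ × σ)) {t : σ →₀ ℕ}
    (ht : coeff t (∏ p ∈ F, (X p.1 - X p.2 : MvPolynomial σ R)) ≠ 0) :
    #{p ∈ F | p.1 ∈ S ∧ p.2 ∈ S} ≤ ∑ i ∈ S, t i := by
  have h := sum_min_le_weight_of_coeff_prod_X_sub_X_ne_zero (fun i => if i ∈ S then 1 else 0) F ht
  simp only [Finsupp.weight_eq_sum, smul_eq_mul, mul_ite, mul_one, mul_zero, sum_ite_mem,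
    univ_inter] at h
  refine (le_of_eq ?_).trans h
  rw [card_filter]
  refine sum_congr rfl fun p _ => ?_
  split_ifs <;> simp_all

end MvPolynomial

theorem SimpleGraph.Subgraph.ncard_edgeSet_le_card_filter_lt {V : Type} [Fintype V]
    [LinearOrder V] {G : SimpleGraph V} (H : G.Subgraph) [DecidableRel H.Adj] :
    H.edgeSet.ncard ≤ #(univ.filter fun p : V × V => p.1 < p.2 ∧ H.Adj p.1 p.2) := by
  classical
  have hsub : H.edgeSet ⊆ ((univ.filter fun p : V × V => p.1 < p.2 ∧ H.Adj p.1 p.2).image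
      fun p => s(p.1, p.2) : Finset (Sym2 V)) := by
    intro e he
    induction e with
    | h x y =>
      rw [SimpleGraph.Subgraph.mem_edgeSet] at he
      rcases (H.adj_sub he).ne.lt_or_gt with hxy | hyx
      · exact mem_image.2 ⟨(x, y), by simp [hxy, he], rfl⟩
      · exact mem_image.2 ⟨(y, x), by simp [hyx, he.symm], Sym2.eq_swap⟩
  calc H.edgeSet.ncard ≤ (_ : Set (Sym2 V)).ncard := Set.ncard_le_ncard hsub
    _ ≤ _ := by rw [Set.ncard_coe_finset]; exact card_image_le

section AlonTarsi

variable {V : Type} [Fintype V] [LinearOrder V] {G : SimpleGraph V} [DecidableRel G.Adj]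

theorem graphPoly_ne_zero : graphPoly G ≠ 0 :=
  prod_ne_zero_iff.2 fun _ hp => sub_ne_zero.2 (X_injective.ne (mem_filter.1 hp).2.1.ne)

theorem isAT_ATnum : IsAT G (ATnum G) := by
  obtain ⟨t, ht⟩ := ne_zero_iff.1 (graphPoly_ne_zero (G := G))
  refine Nat.sInf_mem (s := {k | IsAT G k}) ⟨∑ i, t i + 1, t, ht, fun i => ?_⟩
  exact Nat.succ_le_succ (single_le_sum (fun _ _ => Nat.zero_le _) (mem_univ i))

theorem IsAT.ncard_edgeSet_add_ncard_verts_le {k : ℕ} (hk : IsAT G k) (H : G.Subgraph) :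
    H.edgeSet.ncard + H.verts.ncard ≤ H.verts.ncard * k := by
  classical
  obtain ⟨t, ht, htk⟩ := hk
  set S := H.verts.toFinset
  set E := univ.filter fun p : V × V => p.1 < p.2 ∧ G.Adj p.1 p.2
  have hedges : (univ.filter fun p : V × V => p.1 < p.2 ∧ H.Adj p.1 p.2) ⊆
      E.filter fun p => p.1 ∈ S ∧ p.2 ∈ S := by
    intro p hp
    simp only [E, S, mem_filter, mem_univ, true_and, Set.mem_toFinset] at hp ⊢
    exact ⟨⟨hp.1, H.adj_sub hp.2⟩, H.edge_vert hp.2, H.edge_vert hp.2.symm⟩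
  calc H.edgeSet.ncard + H.verts.ncard
      ≤ #(E.filter fun p => p.1 ∈ S ∧ p.2 ∈ S) + #S := by
        rw [Set.ncard_eq_toFinset_card' H.verts]
        gcongr
        exact H.ncard_edgeSet_le_card_filter_lt.trans (card_le_card hedges)
    _ ≤ ∑ i ∈ S, t i + ∑ _i ∈ S, 1 := by
        rw [card_eq_sum_ones S]
        gcongr
        exact card_filter_le_sum_of_coeff_prod_X_sub_X_ne_zero S E ht
    _ ≤ ∑ _i ∈ S, k := by rw [← sum_add_distrib]; exact sum_le_sum fun i _ => htk i
    _ = H.verts.ncard * k := by rw [sum_const, smul_eq_mul, Set.ncard_eq_toFinset_card']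

end AlonTarsi

/-- `AT(G) ≥ 1 + ⌈m(G)⌉`, where `m(G)` is the maximum density: for every nonempty subgraph `H`
of `G`, `AT(G) ≥ 1 + ⌈e(H)/v(H)⌉`. -/
theorem AT_ge_density (n : ℕ) (G : SimpleGraph (Fin n)) [DecidableRel G.Adj]
    (H : G.Subgraph) (hne : H.verts.Nonempty) :
    ⌈(H.edgeSet.ncard : ℚ) / (H.verts.ncard : ℚ)⌉ + 1 ≤ (ATnum G : ℤ) := by
  have hcount : (H.edgeSet.ncard + H.verts.ncard : ℚ) ≤ H.verts.ncard * ATnum G := by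
    exact_mod_cast isAT_ATnum.ncard_edgeSet_add_ncard_verts_le H
  have hv : (0 : ℚ) < H.verts.ncard := by exact_mod_cast (Set.ncard_pos H.verts.toFinite).2 hne
  have hdensity : (H.edgeSet.ncard : ℚ) / H.verts.ncard ≤ ((ATnum G - 1 : ℤ) : ℚ) := by
    rw [div_le_iff₀ hv]
    push_cast
    linarith
  linarith [Int.ceil_le.2 hdensity]
end

section
/- If H is a subgraph of a graph G, then AT(H) ≤ AT(G). -/
open MvPolynomial Finset

/-!
Relabelling the vertices of `H` along the embedding turns `P_H` into a divisor of `P_G`. Every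
monomial of a product `a * b` with non-zero coefficient dominates some monomial of `a` with
non-zero coefficient, so a monomial of `P_G` with all exponents below `k` yields one of `P_H`.
-/

theorem MvPolynomial.exists_coeff_ne_zero_le_of_dvd {σ R : Type*} [CommSemiring R]
    {a b : MvPolynomial σ R} (hab : a ∣ b) {t : σ →₀ ℕ} (ht : b.coeff t ≠ 0) :
    ∃ s ≤ t, a.coeff s ≠ 0 := by
  classical
  obtain ⟨c, rfl⟩ := hab
  rw [coeff_mul] at ht
  obtain ⟨⟨s, u⟩, hsu, hne⟩ := Finset.exists_ne_zero_of_sum_ne_zero ht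
  rw [HasAntidiagonal.mem_antidiagonal] at hsu
  exact ⟨s, hsu ▸ le_self_add, left_ne_zero_of_mul hne⟩

section GraphPoly

variable {V W : Type} [Fintype V] [LinearOrder V] [Fintype W] [LinearOrder W]

theorem graphPoly_ne_zero_s12 (G : SimpleGraph V) [DecidableRel G.Adj] : graphPoly G ≠ 0 := by
  rw [graphPoly, prod_ne_zero_iff]
  intro p hp
  exact sub_ne_zero.mpr fun h => (mem_filter.mp hp).2.1.ne (X_injective h)

theorem exists_isAT (G : SimpleGraph V) [DecidableRel G.Adj] : ∃ k, IsAT G k := by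
  obtain ⟨t, ht⟩ := support_nonempty.mpr (graphPoly_ne_zero_s12 G)
  exact ⟨∑ i, t i + 1, t, mem_support_iff.mp ht, fun i =>
    Nat.add_le_add_right (single_le_sum (fun j _ => Nat.zero_le (t j)) (mem_univ i)) 1⟩

theorem rename_graphPoly_dvd {H : SimpleGraph V} {G : SimpleGraph W}
    [DecidableRel H.Adj] [DecidableRel G.Adj] {f : V → W} (hf : StrictMono f)
    (hsub : ∀ i j, H.Adj i j → G.Adj (f i) (f j)) :
    rename f (graphPoly H) ∣ graphPoly G := by
  have hmap : Function.Injective (Prod.map f f) := hf.injective.prodMap hf.injective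
  have hrename : rename f (graphPoly H) =
      ∏ q ∈ (univ.filter fun p : V × V => p.1 < p.2 ∧ H.Adj p.1 p.2).image (Prod.map f f),
        (X q.1 - X q.2 : MvPolynomial W ℝ) := by
    rw [prod_image fun _ _ _ _ h => hmap h, graphPoly, map_prod]
    simp
  rw [hrename, graphPoly]
  refine prod_dvd_prod_of_subset _ _ _ fun q hq => ?_
  obtain ⟨p, hp, rfl⟩ := mem_image.mp hq
  obtain ⟨-, hlt, hadj⟩ := mem_filter.mp hp
  exact mem_filter.mpr ⟨mem_univ _, hf hlt, hsub _ _ hadj⟩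

theorem IsAT.of_embedding {H : SimpleGraph V} {G : SimpleGraph W}
    [DecidableRel H.Adj] [DecidableRel G.Adj] {f : V → W} (hf : StrictMono f)
    (hsub : ∀ i j, H.Adj i j → G.Adj (f i) (f j)) {k : ℕ} (hG : IsAT G k) : IsAT H k := by
  obtain ⟨t, ht, htk⟩ := hG
  obtain ⟨s, hst, hs⟩ := exists_coeff_ne_zero_le_of_dvd (rename_graphPoly_dvd hf hsub) ht
  obtain ⟨d, rfl, hd⟩ := coeff_rename_ne_zero _ _ _ hs
  refine ⟨d, hd, fun i => le_trans (Nat.add_le_add_right ?_ 1) (htk (f i))⟩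
  simpa only [Finsupp.mapDomain_apply hf.injective] using hst (f i)

end GraphPoly

/-- If `H` is a subgraph of `G` (via a strictly monotone vertex embedding mapping edges of `H`
to edges of `G`), then `AT(H) ≤ AT(G)`. -/
theorem AT_mono (m n : ℕ) (H : SimpleGraph (Fin m)) (G : SimpleGraph (Fin n))
    [DecidableRel H.Adj] [DecidableRel G.Adj]
    (f : Fin m → Fin n) (hf : StrictMono f)
    (hsub : ∀ i j, H.Adj i j → G.Adj (f i) (f j)) :
    ATnum H ≤ ATnum G :=
  Nat.sInf_le (IsAT.of_embedding hf hsub (Nat.sInf_mem (exists_isAT G)))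
end

section
/- Every uniquely k-colorable graph on n vertices has at least (k−1)n − k(k−1)/2 edges. -/
/-!
Fix a colouring `c` that uses all `k` colours and two colours `i ≠ j`. The subgraph induced on
the two colour classes is connected: otherwise interchanging `i` and `j` on one of its components
(a Kempe interchange) gives a proper colouring that is not a permutation of `c`. Hence it has at
least `Nᵢ + Nⱼ - 1` edges (`Nᵢ` the size of class `i`), each joining colour `i` to colour `j`.
Summing over the `k.choose 2` pairs of colours counts every edge once and every vertex `k - 1` times.
-/

open Finset

/-- A proper coloring of `G` with colors `Fin k`. -/
def ProperColoring {V : Type} (G : SimpleGraph V) {k : ℕ} (c : V → Fin k) : Prop :=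
  ∀ u v, G.Adj u v → c u ≠ c v

/-- `G` is uniquely `k`-colorable: it has a proper coloring using all `k` colors, and any two
proper `k`-colorings differ only by a permutation of the colors. -/
def UniquelyColorable {V : Type} (G : SimpleGraph V) (k : ℕ) : Prop :=
  (∃ c : V → Fin k, Function.Surjective c ∧ ProperColoring G c) ∧
    ∀ c₁ c₂ : V → Fin k, ProperColoring G c₁ → ProperColoring G c₂ →
      ∃ σ : Equiv.Perm (Fin k), c₂ = σ ∘ c₁

namespace Finset

variable {α M : Type*} [AddCommMonoid M]

theorem sum_offDiag_filter_lt_add [LinearOrder α] (s : Finset α) (f : α → M) :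
    ∑ x ∈ s.offDiag with x.1 < x.2, (f x.1 + f x.2) = ∑ x ∈ s.offDiag, f x.1 := by
  have hswap :
      ∑ x ∈ s.offDiag with x.1 < x.2, f x.2 = ∑ x ∈ s.offDiag with ¬ x.1 < x.2, f x.1 := by
    refine sum_equiv (Equiv.prodComm α α) (fun x => ?_) (fun _ _ => rfl)
    simp only [mem_filter, mem_offDiag, Equiv.prodComm_apply, Prod.fst_swap, Prod.snd_swap]
    grind
  rw [sum_add_distrib, hswap, sum_filter_add_sum_filter_not]

theorem sum_offDiag_fst [DecidableEq α] (s : Finset α) (f : α → M) :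
    ∑ x ∈ s.offDiag, f x.1 = (#s - 1) • ∑ a ∈ s, f a := by
  have hoff : s.offDiag = {x ∈ s ×ˢ s | x.1 ≠ x.2} := by ext; simp [and_assoc]
  rw [hoff, sum_filter, sum_product, smul_sum]
  refine sum_congr rfl fun a ha => ?_
  rw [← sum_filter, filter_ne, sum_const (f a), card_erase_of_mem ha]

theorem card_offDiag_filter_lt [LinearOrder α] (s : Finset α) :
    #{x ∈ s.offDiag | x.1 < x.2} = (#s).choose 2 := by
  rw [← card_product_filter_lt]
  congr 1
  ext x
  simp only [mem_filter, mem_offDiag, mem_product]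
  grind

end Finset

theorem Int.natCast_choose_two (k : ℕ) : ((k.choose 2 : ℕ) : ℤ) = k * (k - 1) / 2 := by
  rcases k with _ | k
  · simp
  · rw [Nat.choose_two_right]
    push_cast
    simp

open SimpleGraph

section Coloring

variable {V : Type} {G : SimpleGraph V} {k : ℕ} {c : V → Fin k}

open Classical in
noncomputable def kempeSwap (c : V → Fin k) (i j : Fin k) (T : Set V) : V → Fin k :=
  fun v => if v ∈ T then Equiv.swap i j (c v) else c v

theorem properColoring_kempeSwap (hc : ProperColoring G c) {i j : Fin k} {T : Set V}
    (hT : ∀ a b, G.Adj a b → a ∈ T → c b = i ∨ c b = j → b ∈ T) :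
    ProperColoring G (kempeSwap c i j T) := by
  -- an edge leaving `T` ends at a colour other than `i, j`, which the swap fixes
  have mixed : ∀ a b, G.Adj a b → a ∈ T → b ∉ T → Equiv.swap i j (c a) ≠ c b := by
    intro a b hab ha hb heq
    have hbi : c b ≠ i := fun h => hb (hT a b hab ha (.inl h))
    have hbj : c b ≠ j := fun h => hb (hT a b hab ha (.inr h))
    apply hc a b hab
    rw [← Equiv.swap_apply_self i j (c a), heq, Equiv.swap_apply_of_ne_of_ne hbi hbj]
  intro a b hab
  by_cases ha : a ∈ T <;> by_cases hb : b ∈ T <;>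
    simp only [kempeSwap, ha, hb, if_true, if_false]
  · exact (Equiv.swap i j).injective.ne (hc a b hab)
  · exact mixed a b hab ha hb
  · exact (mixed b a hab.symm hb ha).symm
  · exact hc a b hab

theorem ProperColoring.connected_induce_of_unique (hc : ProperColoring G c)
    (huniq : ∀ c' : V → Fin k, ProperColoring G c' →
      ∃ σ : Equiv.Perm (Fin k), c' = σ ∘ c)
    {i j : Fin k} (hij : i ≠ j) (hi : ∃ v, c v = i) :
    (G.induce {v | c v = i ∨ c v = j}).Connected := by
  set S : Set V := {v | c v = i ∨ c v = j}
  obtain ⟨v₀, hv₀⟩ := hi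
  rw [connected_iff]
  refine ⟨fun u v => ?_, ⟨⟨v₀, .inl hv₀⟩⟩⟩
  by_contra huv
  set T : Set V := {w | ∃ hw : w ∈ S, (G.induce S).Reachable u ⟨w, hw⟩}
  have hT : ∀ a b, G.Adj a b → a ∈ T → c b = i ∨ c b = j → b ∈ T :=
    fun a b hab ⟨_, hua⟩ hb => ⟨hb, hua.trans (Adj.reachable hab)⟩
  have huT : (u : V) ∈ T := ⟨u.2, Reachable.refl _⟩
  have hvT : (v : V) ∉ T := fun ⟨_, huv'⟩ => huv huv'
  obtain ⟨σ, hσ⟩ := huniq _ (properColoring_kempeSwap hc hT)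
  have hσu : σ (c u) = Equiv.swap i j (c u) := by
    simpa [kempeSwap, huT] using (congrFun hσ u).symm
  have hσv : σ (c v) = c v := by
    simpa [kempeSwap, hvT] using (congrFun hσ v).symm
  -- `σ` moves `c u` and fixes `c v`, yet both lie in `{i, j}`
  rcases u.2 with hu | hu <;> rcases v.2 with hv | hv <;> rw [hu] at hσu <;> rw [hv] at hσv <;>
    simp only [Equiv.swap_apply_left, Equiv.swap_apply_right] at hσu
  · exact hij (hσu.symm.trans hσv).symm
  · exact hij (σ.injective (hσu.trans hσv.symm))
  · exact hij (σ.injective (hσv.trans hσu.symm))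
  · exact hij (hσv.symm.trans hσu).symm

theorem ProperColoring.card_add_card_le_of_connected [Fintype V] [DecidableRel G.Adj]
    (hc : ProperColoring G c) {i j : Fin k} (hij : i ≠ j)
    (hconn : (G.induce {v | c v = i ∨ c v = j}).Connected) :
    #{v | c v = i} + #{v | c v = j} ≤ #{e ∈ G.edgeFinset | Sym2.map c e = s(i, j)} + 1 := by
  classical
  set S : Set V := {v | c v = i ∨ c v = j}
  have hvert : #{v | c v = i} + #{v | c v = j} = Nat.card S := by
    rw [← card_union_of_disjoint (disjoint_filter.2 fun v _ h h' => hij (h.symm.trans h')),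
      ← filter_or, Nat.card_eq_fintype_card, Fintype.card_subtype]
    rfl
  have hedge :
      Nat.card (G.induce S).edgeSet ≤ #{e ∈ G.edgeFinset | Sym2.map c e = s(i, j)} := by
    rw [Nat.card_coe_set_eq, ← Set.ncard_coe_finset]
    refine Set.ncard_le_ncard_of_injOn (Sym2.map Subtype.val) (fun e he => ?_)
      (Sym2.map.injective Subtype.val_injective).injOn
    induction e using Sym2.ind with
    | _ a b =>
      have hab : G.Adj a b := he
      have hne : c a ≠ c b := hc a b hab
      simp only [coe_filter, Set.mem_ofPred_eq, mem_edgeFinset, Sym2.map_mk]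
      refine ⟨hab, ?_⟩
      rcases a.2 with ha | ha <;> rcases b.2 with hb | hb <;> rw [ha, hb] at hne ⊢ <;>
        first | exact (hne rfl).elim | rfl | exact Sym2.eq_swap
  have := hconn.card_vert_le_card_edgeSet_add_one
  omega

theorem ProperColoring.sub_one_mul_card_le [Fintype V] [DecidableRel G.Adj]
    (hc : ProperColoring G c) (hsurj : Function.Surjective c)
    (huniq : ∀ c' : V → Fin k, ProperColoring G c' →
      ∃ σ : Equiv.Perm (Fin k), c' = σ ∘ c) :
    (k - 1) * Fintype.card V ≤ #G.edgeFinset + k.choose 2 := by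
  have hvert : ∑ x ∈ univ.offDiag with x.1 < x.2, (#{v | c v = x.1} + #{v | c v = x.2}) =
      (k - 1) * Fintype.card V := by
    refine (sum_offDiag_filter_lt_add _ fun i => #{v | c v = i}).trans ?_
    rw [sum_offDiag_fst _ fun i => #{v | c v = i}, card_univ, Fintype.card_fin, smul_eq_mul,
      ← card_univ, card_eq_sum_card_fiberwise (f := c) (t := univ) (fun _ _ => mem_univ _)]
  have hedge : ∑ x ∈ univ.offDiag with x.1 < x.2,
      #{e ∈ G.edgeFinset | Sym2.map c e = s(x.1, x.2)} = #G.edgeFinset := by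
    refine (sum_sym2_filter_not_isDiag _
      fun z => #{e ∈ G.edgeFinset | Sym2.map c e = z}).symm.trans ?_
    refine (card_eq_sum_card_fiberwise fun e he => ?_).symm
    induction e using Sym2.ind with
    | _ a b => simpa using hc a b (mem_edgeFinset.1 he)
  calc (k - 1) * Fintype.card V
      = ∑ x ∈ univ.offDiag with x.1 < x.2, (#{v | c v = x.1} + #{v | c v = x.2}) := hvert.symm
    _ ≤ ∑ x ∈ univ.offDiag with x.1 < x.2,
          (#{e ∈ G.edgeFinset | Sym2.map c e = s(x.1, x.2)} + 1) := by
      refine sum_le_sum fun x hx => ?_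
      have hne : x.1 ≠ x.2 := (mem_offDiag.1 (mem_filter.1 hx).1).2.2
      exact hc.card_add_card_le_of_connected hne
        (hc.connected_induce_of_unique huniq hne (hsurj x.1))
    _ = #G.edgeFinset + k.choose 2 := by
      simp only [sum_add_distrib, hedge, sum_const, card_offDiag_filter_lt, card_univ,
        Fintype.card_fin, smul_eq_mul, mul_one]

end Coloring

/-- Every uniquely `k`-colorable graph on `n` vertices has at least `(k-1)n - k(k-1)/2` edges. -/
theorem uniquely_colorable_edge_bound (n k : ℕ) (G : SimpleGraph (Fin n)) [DecidableRel G.Adj]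
    (h : UniquelyColorable G k) :
    ((k : ℤ) - 1) * n - k * (k - 1) / 2 ≤ (G.edgeFinset.card : ℤ) := by
  obtain ⟨⟨c, hsurj, hc⟩, huniq⟩ := h
  have hcount := hc.sub_one_mul_card_le hsurj fun c' hc' => huniq c c' hc hc'
  rw [Fintype.card_fin] at hcount
  have hk : (k : ℤ) - 1 ≤ ((k - 1 : ℕ) : ℤ) := by omega
  rw [← Int.natCast_choose_two]
  zify at hcount
  nlinarith
end
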